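/- In the quantum plane E = k⟨x,y⟩/(yx - q·xy), if q is a primitive r-th root of unity with r even, or if char k = 2, then the graded centre of E equals the polynomial subring k[x^r, y^r]. -/

import Mathlib

noncomputable section

open FreeAlgebra

/-- The relation defining the quantum plane `E = k⟨x,y⟩/(yx - q·xy)`. -/
inductive QPRel (k : Type) [Field k] (q : k) :
    FreeAlgebra k (Fin 2) → FreeAlgebra k (Fin 2) → Prop
  | comm : QPRel k q (ι k 1 * ι k 0) (q • (ι k 0 * ι k 1))

/-- The quantum plane `E = k⟨x,y⟩/(yx - q·xy)`. -/
abbrev QP (k : Type) [Field k] (q : k) := RingQuot (QPRel k q)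

/-- The image of `x` in the quantum plane. -/
def qx (k : Type) [Field k] (q : k) : QP k q := RingQuot.mkAlgHom k (QPRel k q) (ι k 0)

/-- The image of `y` in the quantum plane. -/
def qy (k : Type) [Field k] (q : k) : QP k q := RingQuot.mkAlgHom k (QPRel k q) (ι k 1)

/-- The degree-`n` homogeneous component of the quantum plane, spanned by the
monomials `xᵃyᵇ` with `a + b = n` (with `x, y` in degree 1). -/
def QPdeg (k : Type) [Field k] (q : k) (n : ℕ) : Submodule k (QP k q) :=
  Submodule.span k {z | ∃ a b : ℕ, a + b = n ∧ z = qx k q ^ a * qy k q ^ b}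

/-- The graded centre of the quantum plane: the span of the homogeneous elements `z`
(say of degree `n`) such that `zγ = (-1)^{deg z · deg γ} γz` for all homogeneous `γ`. -/
def QPgradedCentre (k : Type) [Field k] (q : k) : Submodule k (QP k q) :=
  Submodule.span k {z | ∃ n : ℕ, z ∈ QPdeg k q n ∧
    ∀ (m : ℕ) (γ : QP k q), γ ∈ QPdeg k q m → z * γ = ((-1 : k) ^ (n * m)) • (γ * z)}

/-! In `E` one has `(xᵃyᵇ)(xᶜyᵈ) = q^{bc} xᵃ⁺ᶜyᵇ⁺ᵈ`, and the monomials `xᵃyᵇ` are linearly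
independent (apply them to `1` in the left regular representation).
A homogeneous `z = Σ cₐᵦ xᵃyᵇ` of degree `n` with `zx = (-1)ⁿxz` and `zy = (-1)ⁿyz` therefore
has `q^b = (-1)ⁿ = q^a` for every monomial it contains, so `q^{a+b} = 1` and `r ∣ a + b = n`.
When `r` is even or `-1 = 1` this forces `(-1)ⁿ = 1`, hence `r ∣ a` and `r ∣ b`, i.e.
`z ∈ k[xʳ, yʳ]`. Conversely the same multiplication rule shows that `xʳ` and `yʳ` are central
of degree `r`, and the sign `(-1)^{rm}` is `1` under either hypothesis. -/

theorem neg_one_pow_eq_one_of_dvd {R : Type*} [Ring R] {r e : ℕ}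
    (h : Even r ∨ ringChar R = 2) (he : r ∣ e) : (-1 : R) ^ e = 1 := by
  rcases h with hr | h2
  · exact (hr.two_dvd.trans he |> even_iff_two_dvd.mpr).neg_one_pow
  · rcases subsingleton_or_nontrivial R with hR | hR
    · exact Subsingleton.elim _ _
    · rw [neg_one_eq_one_iff.mpr h2, one_pow]

theorem IsPrimitiveRoot.dvd_of_pow_eq_neg_one_pow {K : Type*} [CommRing K] {q : K} {r a b : ℕ}
    (hq : IsPrimitiveRoot q r) (h : Even r ∨ ringChar K = 2)
    (ha : q ^ a = (-1) ^ (a + b)) (hb : q ^ b = (-1) ^ (a + b)) : r ∣ a ∧ r ∣ b := by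
  have hab : r ∣ a + b := hq.dvd_of_pow_eq_one _ <| by
    rw [pow_add, ha, hb, ← pow_add, ← two_mul, pow_mul, neg_one_sq, one_pow]
  have hsign := neg_one_pow_eq_one_of_dvd h hab
  exact ⟨hq.dvd_of_pow_eq_one a (ha.trans hsign), hq.dvd_of_pow_eq_one b (hb.trans hsign)⟩

namespace QuantumPlane

open Submodule

variable {k : Type} [Field k] {q : k} {r : ℕ}

theorem qy_mul_qx : qy k q * qx k q = q • (qx k q * qy k q) := by
  rw [qx, qy, ← map_mul, ← map_mul, ← map_smul]
  exact RingQuot.mkAlgHom_rel k QPRel.comm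

theorem qy_pow_mul_qx (b : ℕ) : qy k q ^ b * qx k q = q ^ b • (qx k q * qy k q ^ b) := by
  induction b with
  | zero => simp
  | succ b ih =>
    rw [pow_succ, mul_assoc, qy_mul_qx, mul_smul_comm, ← mul_assoc, ih, smul_mul_assoc,
      smul_smul, mul_assoc, ← pow_succ, ← pow_succ']

theorem qy_pow_mul_qx_pow (a b : ℕ) :
    qy k q ^ b * qx k q ^ a = q ^ (a * b) • (qx k q ^ a * qy k q ^ b) := by
  induction a with
  | zero => simp
  | succ a ih =>
    rw [pow_succ, ← mul_assoc, ih, smul_mul_assoc, mul_assoc, qy_pow_mul_qx, mul_smul_comm,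
      smul_smul, ← mul_assoc, ← pow_succ, ← pow_add, add_one_mul]

variable (k q) in
def mono (p : ℕ × ℕ) : QP k q := qx k q ^ p.1 * qy k q ^ p.2

theorem mono_mul_mono (p p' : ℕ × ℕ) :
    mono k q p * mono k q p' = q ^ (p'.1 * p.2) • mono k q (p + p') := by
  simp only [mono, Prod.fst_add, Prod.snd_add, pow_add]
  rw [mul_assoc, ← mul_assoc (qy k q ^ p.2), qy_pow_mul_qx_pow, smul_mul_assoc, mul_smul_comm]
  simp only [mul_assoc]

theorem mono_zero : mono k q 0 = 1 := by simp [mono]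

-- The left regular representation of `E` on the monomial basis:
-- `x · xᵃyᵇ = xᵃ⁺¹yᵇ` and `y · xᵃyᵇ = qᵃ xᵃyᵇ⁺¹`.

variable (k) in
def shiftX : Module.End k ((ℕ × ℕ) →₀ k) := Finsupp.lmapDomain k k fun p => (p.1 + 1, p.2)

variable (k q) in
def shiftY : Module.End k ((ℕ × ℕ) →₀ k) :=
  Finsupp.lsum ℕ fun p : ℕ × ℕ => q ^ p.1 • Finsupp.lsingle (p.1, p.2 + 1)

theorem shiftX_single (p : ℕ × ℕ) (c : k) :
    shiftX k (Finsupp.single p c) = Finsupp.single (p.1 + 1, p.2) c := by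
  simp [shiftX]

theorem shiftY_single (p : ℕ × ℕ) (c : k) :
    shiftY k q (Finsupp.single p c) = Finsupp.single (p.1, p.2 + 1) (q ^ p.1 * c) := by
  simp [shiftY, Finsupp.smul_single]

theorem shiftY_mul_shiftX : shiftY k q * shiftX k = q • (shiftX k * shiftY k q) := by
  ext p : 2
  simp [shiftX_single, shiftY_single, Finsupp.smul_single, pow_succ, mul_comm]

variable (k q) in
def regularRep : QP k q →ₐ[k] Module.End k ((ℕ × ℕ) →₀ k) :=
  RingQuot.liftAlgHom k ⟨FreeAlgebra.lift k ![shiftX k, shiftY k q], by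
    rintro _ _ ⟨⟩
    simpa using shiftY_mul_shiftX⟩

theorem regularRep_qx : regularRep k q (qx k q) = shiftX k := by
  simp [regularRep, qx]

theorem regularRep_qy : regularRep k q (qy k q) = shiftY k q := by
  simp [regularRep, qy]

theorem shiftX_pow_single (a : ℕ) (p : ℕ × ℕ) (c : k) :
    (shiftX k ^ a) (Finsupp.single p c) = Finsupp.single (p.1 + a, p.2) c := by
  induction a with
  | zero => simp
  | succ a ih => rw [pow_succ', Module.End.mul_apply, ih, shiftX_single, add_assoc]

theorem shiftY_pow_single_zero (b j : ℕ) (c : k) :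
    (shiftY k q ^ b) (Finsupp.single (0, j) c) = Finsupp.single (0, j + b) c := by
  induction b with
  | zero => simp
  | succ b ih => rw [pow_succ', Module.End.mul_apply, ih, shiftY_single, pow_zero, one_mul,
      add_assoc]

theorem regularRep_mono_single_zero (p : ℕ × ℕ) :
    regularRep k q (mono k q p) (Finsupp.single 0 1) = Finsupp.single p 1 := by
  simp only [mono, map_mul, map_pow, regularRep_qx, regularRep_qy, Module.End.mul_apply]
  rw [Prod.zero_eq_mk, shiftY_pow_single_zero, shiftX_pow_single, zero_add, zero_add]

theorem linearIndependent_mono : LinearIndependent k (mono k q) := by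
  refine LinearIndependent.of_comp
    (LinearMap.applyₗ (Finsupp.single 0 1) ∘ₗ (regularRep k q).toLinearMap) ?_
  convert Finsupp.linearIndependent_single_one k (ℕ × ℕ) with p
  exact regularRep_mono_single_zero p

theorem QPdeg_eq_span_mono (n : ℕ) :
    QPdeg k q n = span k (mono k q '' {p | p.1 + p.2 = n}) := by
  rw [QPdeg]
  congr 1
  ext z
  simp [mono, eq_comm]

theorem mono_mem_QPdeg {p : ℕ × ℕ} {n : ℕ} (hp : p.1 + p.2 = n) : mono k q p ∈ QPdeg k q n := by
  rw [QPdeg_eq_span_mono]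
  exact subset_span ⟨p, hp, rfl⟩

theorem mul_mem_QPdeg {m n : ℕ} {z w : QP k q} (hz : z ∈ QPdeg k q m) (hw : w ∈ QPdeg k q n) :
    z * w ∈ QPdeg k q (m + n) := by
  have hmul : QPdeg k q m * QPdeg k q n ≤ QPdeg k q (m + n) := by
    rw [QPdeg_eq_span_mono, QPdeg_eq_span_mono, span_mul_span, span_le, Set.mul_subset_iff]
    rintro _ ⟨p, hp : p.1 + p.2 = m, rfl⟩ _ ⟨p', hp' : p'.1 + p'.2 = n, rfl⟩
    rw [mono_mul_mono]
    exact smul_mem _ _ (mono_mem_QPdeg (by simp only [Prod.fst_add, Prod.snd_add]; omega))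
  exact hmul (mul_mem_mul hz hw)

variable (k q) in
def IsGradedCentral (z : QP k q) : Prop :=
  ∃ n : ℕ, z ∈ QPdeg k q n ∧
    ∀ (m : ℕ) (γ : QP k q), γ ∈ QPdeg k q m → z * γ = ((-1 : k) ^ (n * m)) • (γ * z)

theorem QPgradedCentre_eq_span : QPgradedCentre k q = span k {z | IsGradedCentral k q z} := rfl

theorem IsGradedCentral.mul {z w : QP k q} (hz : IsGradedCentral k q z)
    (hw : IsGradedCentral k q w) : IsGradedCentral k q (z * w) := by
  obtain ⟨n, hzn, hz⟩ := hz
  obtain ⟨n', hwn, hw⟩ := hw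
  refine ⟨n + n', mul_mem_QPdeg hzn hwn, fun m γ hγ => ?_⟩
  rw [mul_assoc, hw m γ hγ, mul_smul_comm, ← mul_assoc, hz m γ hγ, smul_mul_assoc, smul_smul,
    mul_assoc, ← pow_add, add_mul, add_comm (n' * m)]

theorem isGradedCentral_mono (hq : IsPrimitiveRoot q r) (h : Even r ∨ ringChar k = 2)
    {e : ℕ × ℕ} (he₁ : r ∣ e.1) (he₂ : r ∣ e.2) : IsGradedCentral k q (mono k q e) := by
  refine ⟨e.1 + e.2, mono_mem_QPdeg rfl, fun m γ hγ => ?_⟩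
  rw [neg_one_pow_eq_one_of_dvd h ((dvd_add he₁ he₂).mul_right m), one_smul]
  rw [QPdeg_eq_span_mono] at hγ
  refine LinearMap.eqOn_span' (f := LinearMap.mulLeft k (mono k q e))
    (g := LinearMap.mulRight k (mono k q e)) ?_ hγ
  rintro _ ⟨p, -, rfl⟩
  simp only [LinearMap.mulLeft_apply, LinearMap.mulRight_apply, mono_mul_mono, add_comm e p,
    (hq.pow_eq_one_iff_dvd _).mpr (he₁.mul_right _), (hq.pow_eq_one_iff_dvd _).mpr (he₂.mul_left _)]

theorem pow_eq_of_mul_mono_eq_smul {c : ℕ × ℕ →₀ k} {e : ℕ × ℕ} {s : k}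
    (h : Finsupp.linearCombination k (mono k q) c * mono k q e =
      s • (mono k q e * Finsupp.linearCombination k (mono k q) c))
    {p : ℕ × ℕ} (hp : p ∈ c.support) : q ^ (e.1 * p.2) = s * q ^ (p.1 * e.2) := by
  have hsum : ∑ p ∈ c.support,
      (c p * (q ^ (e.1 * p.2) - s * q ^ (p.1 * e.2))) • (mono k q ∘ (· + e)) p = 0 := by
    rw [← sub_eq_zero, Finsupp.linearCombination_apply, Finsupp.sum, Finset.sum_mul,
      Finset.mul_sum, Finset.smul_sum, ← Finset.sum_sub_distrib] at h
    rw [← h]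
    refine Finset.sum_congr rfl fun p _ => ?_
    rw [smul_mul_assoc, mul_smul_comm, mono_mul_mono, mono_mul_mono, add_comm e, smul_smul,
      smul_smul, smul_smul, ← sub_smul, Function.comp_apply]
    ring_nf
  have hcoeff := linearIndependent_iff'.mp
    (linearIndependent_mono.comp _ (add_left_injective e)) c.support _ hsum p hp
  exact sub_eq_zero.mp ((mul_eq_zero.mp hcoeff).resolve_left (Finsupp.mem_support_iff.mp hp))

theorem dvd_of_mem_support_of_gradedCommute (hq : IsPrimitiveRoot q r)
    (h : Even r ∨ ringChar k = 2) {n : ℕ} {c : ℕ × ℕ →₀ k}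
    (hc : c ∈ Finsupp.supported k k {p | p.1 + p.2 = n})
    (hcomm : ∀ (m : ℕ) (γ : QP k q), γ ∈ QPdeg k q m →
      Finsupp.linearCombination k (mono k q) c * γ =
        (-1 : k) ^ (n * m) • (γ * Finsupp.linearCombination k (mono k q) c))
    {p : ℕ × ℕ} (hp : p ∈ c.support) : r ∣ p.1 ∧ r ∣ p.2 := by
  have hpn : p.1 + p.2 = n := hc hp
  have hx := pow_eq_of_mul_mono_eq_smul (hcomm 1 _ (mono_mem_QPdeg (p := (1, 0)) rfl)) hp
  have hy := pow_eq_of_mul_mono_eq_smul (hcomm 1 _ (mono_mem_QPdeg (p := (0, 1)) rfl)) hp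
  simp only [one_mul, zero_mul, mul_one, mul_zero, pow_zero] at hx hy
  have hsign : (-1 : k) ^ n * (-1) ^ n = 1 := by rw [← mul_pow, neg_one_mul, neg_neg, one_pow]
  have hy' : q ^ p.1 = (-1) ^ n := by linear_combination (-(-1) ^ n) * hy - q ^ p.1 * hsign
  exact hq.dvd_of_pow_eq_neg_one_pow h (hpn ▸ hy') (hpn ▸ hx)

theorem mono_mem_adjoin {p : ℕ × ℕ} (hp : r ∣ p.1 ∧ r ∣ p.2) :
    mono k q p ∈ Algebra.adjoin k {qx k q ^ r, qy k q ^ r} := by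
  obtain ⟨⟨a, ha⟩, ⟨b, hb⟩⟩ := hp
  have hx : qx k q ^ r ∈ Algebra.adjoin k {qx k q ^ r, qy k q ^ r} :=
    Algebra.subset_adjoin (Set.mem_insert _ _)
  have hy : qy k q ^ r ∈ Algebra.adjoin k {qx k q ^ r, qy k q ^ r} :=
    Algebra.subset_adjoin (Set.mem_insert_of_mem _ (Set.mem_singleton _))
  rw [mono, ha, hb, pow_mul, pow_mul]
  exact Subalgebra.mul_mem _ (Subalgebra.pow_mem _ hx _) (Subalgebra.pow_mem _ hy _)

theorem QPgradedCentre_le_adjoin (hq : IsPrimitiveRoot q r) (h : Even r ∨ ringChar k = 2) :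
    QPgradedCentre k q ≤ Subalgebra.toSubmodule (Algebra.adjoin k {qx k q ^ r, qy k q ^ r}) := by
  rw [QPgradedCentre_eq_span, span_le]
  rintro _ ⟨n, hzn, hcomm⟩
  rw [QPdeg_eq_span_mono, Finsupp.mem_span_image_iff_linearCombination] at hzn
  obtain ⟨c, hc, rfl⟩ := hzn
  rw [SetLike.mem_coe, Subalgebra.mem_toSubmodule, Finsupp.linearCombination_apply]
  exact Subalgebra.sum_mem _ fun p hp => Subalgebra.smul_mem _
    (mono_mem_adjoin (dvd_of_mem_support_of_gradedCommute hq h hc hcomm hp)) _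

theorem adjoin_le_QPgradedCentre (hq : IsPrimitiveRoot q r) (h : Even r ∨ ringChar k = 2) :
    Subalgebra.toSubmodule (Algebra.adjoin k {qx k q ^ r, qy k q ^ r}) ≤ QPgradedCentre k q := by
  rw [Algebra.adjoin_eq_span, QPgradedCentre_eq_span]
  refine span_mono fun z hz => ?_
  induction hz using Submonoid.closure_induction with
  | mem z hz =>
    rcases hz with rfl | rfl
    · simpa [mono] using isGradedCentral_mono hq h (e := (r, 0)) dvd_rfl (dvd_zero r)
    · simpa [mono] using isGradedCentral_mono hq h (e := (0, r)) (dvd_zero r) dvd_rfl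
  | one => simpa [mono_zero] using isGradedCentral_mono hq h (e := 0) (dvd_zero r) (dvd_zero r)
  | mul z w _ _ hz hw => exact hz.mul hw

end QuantumPlane

/-- If `q` is a primitive `r`-th root of unity with `r` even, or if `char k = 2`,
then the graded centre of the quantum plane equals the polynomial subring `k[xʳ, yʳ]`. -/
theorem qp_gradedCentre_even_or_char_two (k : Type) [Field k] (q : k) (r : ℕ)
    (hq : IsPrimitiveRoot q r) (h : Even r ∨ ringChar k = 2) :
    QPgradedCentre k q =
      Subalgebra.toSubmodule (Algebra.adjoin k {qx k q ^ r, qy k q ^ r}) :=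
  le_antisymm (QuantumPlane.QPgradedCentre_le_adjoin hq h)
    (QuantumPlane.adjoin_le_QPgradedCentre hq h)
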